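/- arXiv:2507.20150 — 3 statements merged into one kernel-verified Lean document; each statement's English description precedes it below -/
import Mathlib

section
/- Discontinuity for uniform stochastic policies: suppose for R₀ ∈ C(S×A) there is a state s₀ ∈ S such that A*(s₀;R₀) is finite with m = |A*(s₀;R₀)| ≥ 2, and fix a₂ ∈ A*(s₀;R₀). Then there exists a sequence (Rₙ) in C(S×A) with ‖Rₙ − R₀‖∞ → 0 and A*(s₀;Rₙ) = {a₂} for all n, such that the uniform probability distribution μₙ on A*(s₀;Rₙ) (namely the Dirac measure at a₂) and the uniform distribution μ₀ on A*(s₀;R₀) satisfy d_TV(μₙ, μ₀) = (m−1)/m ≥ 1/2 for all n; hence the map R ↦ (uniform distribution on A*(s₀;R)) is discontinuous at R₀ in total variation distance. -/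
set_option linter.unusedSectionVars false

open MeasureTheory ProbabilityTheory Filter Topology

section Aux

variable {S A : Type*}
    [MetricSpace S] [CompactSpace S] [MeasurableSpace S] [BorelSpace S]
    [MetricSpace A] [CompactSpace A] [Nonempty A] [MeasurableSpace A] [BorelSpace A]

lemma sup_cont (Q : C(S × A, ℝ)) : Continuous fun s : S => ⨆ a : A, Q (s, a) := by
  have : (fun s : S => ⨆ a : A, Q (s, a))
      = fun s : S => sSup ((fun a : A => Q (s, a)) '' Set.univ) := by
    funext s
    rw [Set.image_univ, sSup_range]
  rw [this]
  exact isCompact_univ.continuous_sSup (by fun_prop)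

lemma sup_le_sup_add (Q₁ Q₂ : C(S × A, ℝ)) (s : S) :
    (⨆ a : A, Q₁ (s, a)) ≤ (⨆ a : A, Q₂ (s, a)) + ‖Q₁ - Q₂‖ := by
  have hbdd : BddAbove (Set.range fun a : A => Q₂ (s, a)) :=
    (isCompact_range (by fun_prop)).bddAbove
  refine ciSup_le fun a => ?_
  have h1 : Q₁ (s, a) - Q₂ (s, a) ≤ ‖Q₁ - Q₂‖ := by
    have := ContinuousMap.norm_coe_le_norm (Q₁ - Q₂) (s, a)
    simp only [ContinuousMap.sub_apply, Real.norm_eq_abs] at this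
    linarith [abs_le.1 this]
  have h2 : Q₂ (s, a) ≤ ⨆ a : A, Q₂ (s, a) := le_ciSup hbdd a
  linarith

lemma abs_sup_sub_sup_le (Q₁ Q₂ : C(S × A, ℝ)) (s : S) :
    |(⨆ a : A, Q₁ (s, a)) - (⨆ a : A, Q₂ (s, a))| ≤ ‖Q₁ - Q₂‖ := by
  rw [abs_sub_le_iff]
  constructor
  · linarith [sup_le_sup_add Q₁ Q₂ s]
  · have := sup_le_sup_add Q₂ Q₁ s
    rw [show Q₂ - Q₁ = -(Q₁ - Q₂) by ring, norm_neg] at this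
    linarith

lemma abs_int_sup_sub (Q₁ Q₂ : C(S × A, ℝ)) (μ : Measure S) [IsProbabilityMeasure μ] :
    |(∫ s', (⨆ a : A, Q₁ (s', a)) ∂μ) - ∫ s', (⨆ a : A, Q₂ (s', a)) ∂μ| ≤ ‖Q₁ - Q₂‖ := by
  have hi : ∀ Q : C(S × A, ℝ), Integrable (fun s : S => ⨆ a : A, Q (s, a)) μ :=
    fun Q => (sup_cont Q).integrable_of_hasCompactSupport
      (HasCompactSupport.of_compactSpace _)
  rw [← integral_sub (hi Q₁) (hi Q₂)]
  have := norm_integral_le_of_norm_le_const (μ := μ)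
    (f := fun s : S => (⨆ a : A, Q₁ (s, a)) - ⨆ a : A, Q₂ (s, a)) (C := ‖Q₁ - Q₂‖)
    (ae_of_all _ fun s => by simpa using abs_sup_sub_sup_le Q₁ Q₂ s)
  simpa using this

lemma bellman_unique
    (γ : ℝ) (hγ0 : 0 ≤ γ) (hγ1 : γ < 1)
    (P : Kernel (S × A) S) [IsMarkovKernel P]
    (R Q₁ Q₂ : C(S × A, ℝ))
    (h₁ : ∀ p : S × A, Q₁ p = R p + γ * ∫ s', (⨆ a' : A, Q₁ (s', a')) ∂(P p))
    (h₂ : ∀ p : S × A, Q₂ p = R p + γ * ∫ s', (⨆ a' : A, Q₂ (s', a')) ∂(P p)) :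
    Q₁ = Q₂ := by
  have key : ‖Q₁ - Q₂‖ ≤ γ * ‖Q₁ - Q₂‖ := by
    refine ContinuousMap.norm_le _ (by positivity) |>.mpr fun p => ?_
    have : (Q₁ - Q₂) p = γ * ((∫ s', (⨆ a : A, Q₁ (s', a)) ∂(P p))
        - ∫ s', (⨆ a : A, Q₂ (s', a)) ∂(P p)) := by
      simp only [ContinuousMap.sub_apply, h₁ p, h₂ p]; ring
    rw [Real.norm_eq_abs, this, abs_mul, abs_of_nonneg hγ0]
    exact mul_le_mul_of_nonneg_left (abs_int_sup_sub Q₁ Q₂ (P p)) hγ0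
  have h0 : ‖Q₁ - Q₂‖ ≤ 0 := by nlinarith [norm_nonneg (Q₁ - Q₂)]
  have := le_antisymm h0 (norm_nonneg _)
  rwa [norm_eq_zero, sub_eq_zero] at this

end Aux

/-- Discontinuity for uniform stochastic policies: if
`A*(s₀;R₀)` is finite with `m = |A*(s₀;R₀)| ≥ 2` and `a₂ ∈ A*(s₀;R₀)`, then there is
a sequence `Rₙ` with `‖Rₙ - R₀‖ → 0` and `A*(s₀;Rₙ) = {a₂}` for all `n`, such that
the total variation distance between the uniform distribution on `A*(s₀;Rₙ)` (the
Dirac measure at `a₂`) and the uniform distribution on `A*(s₀;R₀)` equals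
`(m-1)/m ≥ 1/2` for all `n`; hence the TV distances do not tend to `0`. -/
theorem uniform_policy_discontinuity
    {S A : Type*}
    [MetricSpace S] [CompactSpace S] [MeasurableSpace S] [BorelSpace S]
    [MetricSpace A] [CompactSpace A] [Nonempty A] [MeasurableSpace A] [BorelSpace A]
    [DecidableEq A]
    (γ : ℝ) (hγ0 : 0 ≤ γ) (hγ1 : γ < 1)
    (P : Kernel (S × A) S) [IsMarkovKernel P]
    (hFeller : ∀ f : C(S, ℝ), Continuous fun p : S × A => ∫ s', f s' ∂(P p))
    (Qstar : C(S × A, ℝ) → C(S × A, ℝ))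
    (hQstar : ∀ (R : C(S × A, ℝ)) (p : S × A),
      Qstar R p = R p + γ * ∫ s', (⨆ a' : A, Qstar R (s', a')) ∂(P p))
    (R₀ : C(S × A, ℝ)) (s₀ : S)
    (hfin : {a : A | ∀ b : A, Qstar R₀ (s₀, b) ≤ Qstar R₀ (s₀, a)}.Finite)
    (hm : 2 ≤ hfin.toFinset.card)
    (a₂ : A)
    (ha₂ : a₂ ∈ {a : A | ∀ b : A, Qstar R₀ (s₀, b) ≤ Qstar R₀ (s₀, a)}) :
    ∃ Rn : ℕ → C(S × A, ℝ),
      Tendsto (fun n => ‖Rn n - R₀‖) atTop (𝓝 0) ∧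
      (∀ n, {a : A | ∀ b : A, Qstar (Rn n) (s₀, b) ≤ Qstar (Rn n) (s₀, a)} = {a₂}) ∧
      (1 / 2 : ℝ) * ∑ a ∈ hfin.toFinset,
          |(if a = a₂ then (1 : ℝ) else 0) - 1 / (hfin.toFinset.card : ℝ)|
        = ((hfin.toFinset.card : ℝ) - 1) / (hfin.toFinset.card : ℝ) ∧
      (1 / 2 : ℝ) ≤ ((hfin.toFinset.card : ℝ) - 1) / (hfin.toFinset.card : ℝ) ∧
      ¬ Tendsto (fun _ : ℕ =>
          (1 / 2 : ℝ) * ∑ a ∈ hfin.toFinset,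
            |(if a = a₂ then (1 : ℝ) else 0) - 1 / (hfin.toFinset.card : ℝ)|)
        atTop (𝓝 0) := by
  classical
  set Q₀ : C(S × A, ℝ) := Qstar R₀ with hQ₀
  set h : C(S × A, ℝ) := ⟨fun p => -dist p.2 a₂, by fun_prop⟩ with hh
  set ε : ℕ → ℝ := fun n => ((n : ℝ) + 1)⁻¹ with hε
  have hεpos : ∀ n, 0 < ε n := fun n => by positivity
  set Qn : ℕ → C(S × A, ℝ) := fun n => Q₀ + (ε n) • h with hQn
  set Rn : ℕ → C(S × A, ℝ) := fun n =>
    ⟨fun p => Qn n p - γ * ∫ s', (⨆ a' : A, Qn n (s', a')) ∂(P p),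
      ((Qn n).continuous).sub (continuous_const.mul
        (hFeller ⟨fun s => ⨆ a : A, Qn n (s, a), sup_cont (Qn n)⟩))⟩ with hRn
  have hfix : ∀ n (p : S × A),
      Qn n p = Rn n p + γ * ∫ s', (⨆ a' : A, Qn n (s', a')) ∂(P p) := by
    intro n p
    simp only [hRn, ContinuousMap.coe_mk]
    ring
  have hQeq : ∀ n, Qstar (Rn n) = Qn n := fun n =>
    bellman_unique γ hγ0 hγ1 P (Rn n) _ _ (hQstar (Rn n)) (hfix n)
  -- values of Qn
  have hQnval : ∀ n (a : A), Qn n (s₀, a) = Q₀ (s₀, a) - ε n * dist a a₂ := by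
    intro n a
    simp [hQn, hh]
    ring
  -- argmax set
  have hset : ∀ n, {a : A | ∀ b : A, Qstar (Rn n) (s₀, b) ≤ Qstar (Rn n) (s₀, a)} = {a₂} := by
    intro n
    rw [hQeq n]
    ext a
    simp only [Set.mem_setOf_eq, Set.mem_singleton_iff]
    constructor
    · intro H
      have h1 := H a₂
      rw [hQnval n a, hQnval n a₂, dist_self] at h1
      have h2 : Q₀ (s₀, a) ≤ Q₀ (s₀, a₂) := ha₂ a
      have h3 : ε n * dist a a₂ ≤ 0 := by linarith
      have h4 : dist a a₂ = 0 := le_antisymm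
        (nonpos_of_mul_nonpos_right h3 (hεpos n) |>.trans le_rfl) dist_nonneg
      rwa [dist_eq_zero] at h4
    · intro ha b
      rw [ha, hQnval n b, hQnval n a₂, dist_self]
      have := ha₂ b
      have := dist_nonneg (x := b) (y := a₂)
      have := (hεpos n).le
      nlinarith
  -- norm bound
  have hbound : ∀ n, ‖Rn n - R₀‖ ≤ (1 + γ) * ‖h‖ * ε n := by
    intro n
    refine (ContinuousMap.norm_le _ (by positivity)).mpr fun p => ?_
    have hR₀p : R₀ p = Q₀ p - γ * ∫ s', (⨆ a' : A, Q₀ (s', a')) ∂(P p) := by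
      have := hQstar R₀ p
      rw [← hQ₀] at this
      linarith
    have hdiff : (Rn n - R₀) p = ε n * h p
        - γ * ((∫ s', (⨆ a' : A, Qn n (s', a')) ∂(P p))
          - ∫ s', (⨆ a' : A, Q₀ (s', a')) ∂(P p)) := by
      simp only [ContinuousMap.sub_apply, hRn, ContinuousMap.coe_mk, hR₀p,
        hQn, ContinuousMap.add_apply, ContinuousMap.smul_apply, smul_eq_mul]
      ring
    rw [Real.norm_eq_abs, hdiff]
    have h1 : |ε n * h p| ≤ ε n * ‖h‖ := by
      rw [abs_mul, abs_of_nonneg (hεpos n).le]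
      exact mul_le_mul_of_nonneg_left
        (by simpa using (ContinuousMap.norm_coe_le_norm h p)) (hεpos n).le
    have h2 : |(∫ s', (⨆ a' : A, Qn n (s', a')) ∂(P p))
        - ∫ s', (⨆ a' : A, Q₀ (s', a')) ∂(P p)| ≤ ‖Qn n - Q₀‖ :=
      abs_int_sup_sub (Qn n) Q₀ (P p)
    have h3 : ‖Qn n - Q₀‖ ≤ ε n * ‖h‖ := by
      refine (ContinuousMap.norm_le _ (by positivity)).mpr fun q => ?_
      simp only [hQn, ContinuousMap.sub_apply, ContinuousMap.add_apply,
        ContinuousMap.smul_apply, smul_eq_mul]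
      rw [show Q₀ q + ε n * h q - Q₀ q = ε n * h q by ring, Real.norm_eq_abs,
        abs_mul, abs_of_nonneg (hεpos n).le]
      exact mul_le_mul_of_nonneg_left
        (by simpa using ContinuousMap.norm_coe_le_norm h q) (hεpos n).le
    replace h2 := h2.trans h3
    calc |ε n * h p - γ * _| ≤ |ε n * h p| + γ * |(∫ s', (⨆ a' : A, Qn n (s', a')) ∂(P p))
          - ∫ s', (⨆ a' : A, Q₀ (s', a')) ∂(P p)| := by
          refine (abs_sub _ _).trans ?_
          rw [abs_mul γ, abs_of_nonneg hγ0]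
      _ ≤ ε n * ‖h‖ + γ * (ε n * ‖h‖) := by
          refine add_le_add h1 (mul_le_mul_of_nonneg_left h2 hγ0)
      _ = (1 + γ) * ‖h‖ * ε n := by ring
  have htend : Tendsto (fun n => ‖Rn n - R₀‖) atTop (𝓝 0) := by
    refine squeeze_zero (fun n => norm_nonneg _) hbound ?_
    have : Tendsto (fun n : ℕ => ((1 + γ) * ‖h‖) * (1 / ((n : ℝ) + 1))) atTop (𝓝 0) := by
      simpa using tendsto_one_div_add_atTop_nhds_zero_nat.const_mul ((1 + γ) * ‖h‖)
    simpa [hε, one_div, mul_assoc] using this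
  -- TV computation
  have ha₂T : a₂ ∈ hfin.toFinset := hfin.mem_toFinset.mpr ha₂
  set m : ℕ := hfin.toFinset.card with hmdef
  have hm2 : (2 : ℝ) ≤ (m : ℝ) := by exact_mod_cast hm
  have hm0 : (0 : ℝ) < (m : ℝ) := by linarith
  have hsum : ∑ a ∈ hfin.toFinset,
      |(if a = a₂ then (1 : ℝ) else 0) - 1 / (m : ℝ)|
      = (1 - 1 / (m : ℝ)) + ((m : ℝ) - 1) * (1 / (m : ℝ)) := by
    rw [← Finset.add_sum_erase _ _ ha₂T]
    congr 1
    · rw [if_pos rfl, abs_of_nonneg]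
      have : 1 / (m : ℝ) ≤ 1 := by
        rw [div_le_one hm0]; linarith
      linarith
    · rw [Finset.sum_congr rfl (fun a ha => ?_), Finset.sum_const,
        Finset.card_erase_of_mem ha₂T, nsmul_eq_mul]
      · congr 1
        rw [Nat.cast_sub (by omega : 1 ≤ m)]
        norm_num
      · rw [if_neg (Finset.ne_of_mem_erase ha)]
        rw [abs_of_nonpos (sub_nonpos.mpr (one_div_nonneg.mpr hm0.le))]
        ring
  have heq : (1 / 2 : ℝ) * ∑ a ∈ hfin.toFinset,
      |(if a = a₂ then (1 : ℝ) else 0) - 1 / (hfin.toFinset.card : ℝ)|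
      = ((hfin.toFinset.card : ℝ) - 1) / (hfin.toFinset.card : ℝ) := by
    rw [← hmdef, hsum]
    field_simp
    ring
  have hge : (1 / 2 : ℝ) ≤ ((hfin.toFinset.card : ℝ) - 1) / (hfin.toFinset.card : ℝ) := by
    rw [← hmdef, le_div_iff₀ hm0]
    linarith
  refine ⟨Rn, htend, hset, heq, hge, ?_⟩
  intro hT
  have := tendsto_nhds_unique hT tendsto_const_nhds
  rw [heq] at this
  linarith [hge, this]
end

section
/- Upper hemi-continuity of the effective argmax correspondence: let w₁,…,w_N : S → [0,1] be continuous with Σ_{k=1}^N w_k(s) = 1 for all s ∈ S, and for a tuple R of functions in C(S×A) let Q*_eff(·,·;R) be the unique fixed point of the Bellman optimality operator for R_eff(s,a;R) = Σ_k w_k(s)R_k(s,a), and let A*_eff(s;R) = argmax_{a∈A} Q*_eff(s,a;R). Then for each fixed s ∈ S: A*_eff(s;R) is non-empty and compact for every tuple R, and the correspondence R ↦ A*_eff(s;R) has closed graph: if ‖Rₙ − R₀‖_N → 0, aₙ ∈ A*_eff(s;Rₙ) for all n, and aₙ → a₀ in A, then a₀ ∈ A*_eff(s;R₀). -/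
/-!
Two Bellman fixed points for rewards `r`, `r'` satisfy `‖Q - Q'‖ ≤ ‖r - r'‖ + γ ‖Q - Q'‖`, because
the fibrewise maximum `Q ↦ (s ↦ max_a Q (s, a))` and integration against a Markov kernel are
sup-norm contractions. The effective reward is a convex combination of the `R_k`, so
`R ↦ Q*_eff(·,·;R)` is Lipschitz for the max-norm on tuples. Each argmax set is closed in the
compact space `A` and non-empty by the extreme value theorem; the closed graph property holds
because `{(Q, a) | a maximises Q (s, ·)}` is closed in `C(S × A) × A`.
-/

open MeasureTheory ProbabilityTheory Filter Topology

theorem pi_norm_eq_ciSup {ι : Type*} [Fintype ι] {E : ι → Type*} [∀ i, SeminormedAddGroup (E i)]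
    (f : ∀ i, E i) : ‖f‖ = ⨆ i, ‖f i‖ := by
  have hbdd : BddAbove (Set.range fun i => ‖f i‖) := (Set.finite_range _).bddAbove
  refine le_antisymm ?_ (Real.iSup_le (norm_le_pi_norm f) (norm_nonneg f))
  exact (pi_norm_le_iff_of_nonneg (Real.iSup_nonneg fun i => norm_nonneg (f i))).2
    fun i => le_ciSup hbdd i

theorem isClosed_setOf_forall_apply_le {Y A : Type*} [TopologicalSpace Y] [TopologicalSpace A]
    {F : Y → A → ℝ} (hF : Continuous (Function.uncurry F)) :
    IsClosed {p : Y × A | ∀ b, F p.1 b ≤ F p.1 p.2} := by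
  simp only [Set.ofPred_forall]
  exact isClosed_iInter fun b =>
    isClosed_le (hF.comp (continuous_fst.prodMk continuous_const)) hF

theorem abs_integral_sub_integral_le {X : Type*} [TopologicalSpace X] [CompactSpace X]
    [MeasurableSpace X] [OpensMeasurableSpace X] (μ : Measure X) [IsProbabilityMeasure μ]
    (f g : C(X, ℝ)) : |∫ x, f x ∂μ - ∫ x, g x ∂μ| ≤ ‖f - g‖ := by
  have hint : ∀ h : C(X, ℝ), Integrable h μ := fun h =>
    h.continuous.integrable_of_hasCompactSupport (.of_compactSpace _)
  rw [← integral_sub (hint f) (hint g)]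
  have h := (BoundedContinuousFunction.mkOfCompact (f - g)).norm_integral_le_norm μ
  rwa [BoundedContinuousFunction.norm_mkOfCompact] at h

section FiberSup

variable {X A : Type*} [TopologicalSpace X] [TopologicalSpace A] [CompactSpace A]

noncomputable def fiberSup (Q : C(X × A, ℝ)) : C(X, ℝ) where
  toFun x := ⨆ a, Q (x, a)
  continuous_toFun := by
    simpa only [Set.image_univ, iSup] using
      isCompact_univ.continuous_sSup (f := fun x a => Q (x, a)) Q.continuous

@[simp]
theorem fiberSup_apply (Q : C(X × A, ℝ)) (x : X) : fiberSup Q x = ⨆ a, Q (x, a) := rfl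

variable [CompactSpace X] [Nonempty A]

theorem fiberSup_sub_le (Q Q' : C(X × A, ℝ)) (x : X) :
    fiberSup Q x - fiberSup Q' x ≤ ‖Q - Q'‖ := by
  have hbdd : BddAbove (Set.range fun a => Q' (x, a)) :=
    (isCompact_range (by fun_prop)).bddAbove
  rw [sub_le_iff_le_add, fiberSup_apply]
  refine ciSup_le fun a => ?_
  calc Q (x, a) ≤ ‖Q - Q'‖ + Q' (x, a) :=
        sub_le_iff_le_add.1 ((le_abs_self _).trans ((Q - Q').norm_coe_le_norm (x, a)))
    _ ≤ ‖Q - Q'‖ + fiberSup Q' x := by gcongr; exact le_ciSup hbdd a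

theorem norm_fiberSup_sub_le (Q Q' : C(X × A, ℝ)) : ‖fiberSup Q - fiberSup Q'‖ ≤ ‖Q - Q'‖ :=
  (ContinuousMap.norm_le _ (norm_nonneg _)).2 fun x => abs_sub_le_iff.2
    ⟨fiberSup_sub_le Q Q' x, norm_sub_rev Q Q' ▸ fiberSup_sub_le Q' Q x⟩

end FiberSup

section Bellman

variable {S A : Type*} [TopologicalSpace S] [MeasurableSpace S] [TopologicalSpace A]
  [MeasurableSpace A]

def IsBellmanFixedPoint (γ : ℝ) (P : Kernel (S × A) S) (r Q : C(S × A, ℝ)) : Prop :=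
  ∀ p, Q p = r p + γ * ∫ s', (⨆ a', Q (s', a')) ∂(P p)

theorem IsBellmanFixedPoint.norm_sub_le [CompactSpace S] [OpensMeasurableSpace S] [CompactSpace A]
    [Nonempty A] {γ : ℝ} (hγ0 : 0 ≤ γ) (hγ1 : γ < 1) {P : Kernel (S × A) S} [IsMarkovKernel P]
    {r r' Q Q' : C(S × A, ℝ)} (hQ : IsBellmanFixedPoint γ P r Q)
    (hQ' : IsBellmanFixedPoint γ P r' Q') : ‖Q - Q'‖ ≤ ‖r - r'‖ / (1 - γ) := by
  have hpt : ∀ p, ‖(Q - Q') p‖ ≤ ‖r - r'‖ + γ * ‖Q - Q'‖ := by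
    intro p
    have hV : |∫ s', (⨆ a', Q (s', a')) ∂(P p) - ∫ s', (⨆ a', Q' (s', a')) ∂(P p)| ≤ ‖Q - Q'‖ :=
      (abs_integral_sub_integral_le (P p) (fiberSup Q) (fiberSup Q')).trans
        (norm_fiberSup_sub_le Q Q')
    have hr : |(r - r') p| ≤ ‖r - r'‖ := (r - r').norm_coe_le_norm p
    have hsplit : (Q - Q') p = (r - r') p +
        γ * (∫ s', (⨆ a', Q (s', a')) ∂(P p) - ∫ s', (⨆ a', Q' (s', a')) ∂(P p)) := by
      rw [ContinuousMap.sub_apply, ContinuousMap.sub_apply, hQ p, hQ' p]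
      ring
    rw [hsplit, Real.norm_eq_abs]
    refine (abs_add_le _ _).trans ?_
    rw [abs_mul, abs_of_nonneg hγ0]
    gcongr
  have hnorm : ‖Q - Q'‖ ≤ ‖r - r'‖ + γ * ‖Q - Q'‖ :=
    (ContinuousMap.norm_le _ (by positivity)).2 hpt
  rw [le_div_iff₀ (by linarith)]
  linarith

end Bellman

section EffectiveReward

variable {ι S A : Type*} [Fintype ι] [TopologicalSpace S] [TopologicalSpace A]

def effectiveReward (w : ι → C(S, ℝ)) (R : ι → C(S × A, ℝ)) : C(S × A, ℝ) :=
  ∑ k, (w k).comp ContinuousMap.fst * R k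

@[simp]
theorem effectiveReward_apply (w : ι → C(S, ℝ)) (R : ι → C(S × A, ℝ)) (p : S × A) :
    effectiveReward w R p = ∑ k, w k p.1 * R k p := by
  simp [effectiveReward]

theorem effectiveReward_sub (w : ι → C(S, ℝ)) (R R' : ι → C(S × A, ℝ)) :
    effectiveReward w R - effectiveReward w R' = effectiveReward w (R - R') := by
  ext p
  simp [mul_sub]

theorem norm_effectiveReward_le [CompactSpace S] [CompactSpace A] {w : ι → C(S, ℝ)}
    (hw0 : ∀ k s, 0 ≤ w k s) (hw1 : ∀ s, ∑ k, w k s = 1) (R : ι → C(S × A, ℝ)) :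
    ‖effectiveReward w R‖ ≤ ‖R‖ := by
  refine (ContinuousMap.norm_le _ (norm_nonneg R)).2 fun p => ?_
  calc ‖effectiveReward w R p‖ = |∑ k, w k p.1 * R k p| := by
        rw [effectiveReward_apply, Real.norm_eq_abs]
    _ ≤ ∑ k, w k p.1 * |R k p| := by
        refine (Finset.abs_sum_le_sum_abs _ _).trans_eq (Finset.sum_congr rfl fun k _ => ?_)
        rw [abs_mul, abs_of_nonneg (hw0 k p.1)]
    _ ≤ ∑ k, w k p.1 * ‖R‖ := by
        gcongr with k
        · exact hw0 k p.1
        · exact ((R k).norm_coe_le_norm p).trans (norm_le_pi_norm R k)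
    _ = ‖R‖ := by rw [← Finset.sum_mul, hw1, one_mul]

end EffectiveReward

theorem effective_argmax_uhc_general
    {S A : Type*}
    [MetricSpace S] [CompactSpace S] [MeasurableSpace S] [BorelSpace S]
    [MetricSpace A] [CompactSpace A] [Nonempty A] [MeasurableSpace A]
    (γ : ℝ) (hγ0 : 0 ≤ γ) (hγ1 : γ < 1)
    (P : Kernel (S × A) S) [IsMarkovKernel P]
    (N : ℕ)
    (w : Fin N → C(S, ℝ))
    (hw01 : ∀ (k : Fin N) (s : S), w k s ∈ Set.Icc (0 : ℝ) 1)
    (hwsum : ∀ s : S, ∑ k, w k s = 1)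
    (Qstar : (Fin N → C(S × A, ℝ)) → C(S × A, ℝ))
    (hQstar : ∀ (R : Fin N → C(S × A, ℝ)) (p : S × A),
      Qstar R p = (∑ k, w k p.1 * R k p) + γ * ∫ s', (⨆ a' : A, Qstar R (s', a')) ∂(P p))
    (s : S) :
    (∀ R : Fin N → C(S × A, ℝ),
      ({a : A | ∀ b : A, Qstar R (s, b) ≤ Qstar R (s, a)}).Nonempty ∧
      IsCompact {a : A | ∀ b : A, Qstar R (s, b) ≤ Qstar R (s, a)}) ∧
    (∀ (R₀ : Fin N → C(S × A, ℝ)) (Rn : ℕ → Fin N → C(S × A, ℝ)) (a : ℕ → A) (a₀ : A),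
      Tendsto (fun n => ⨆ k, ‖Rn n k - R₀ k‖) atTop (𝓝 0) →
      (∀ n, ∀ b : A, Qstar (Rn n) (s, b) ≤ Qstar (Rn n) (s, a n)) →
      Tendsto a atTop (𝓝 a₀) →
      ∀ b : A, Qstar R₀ (s, b) ≤ Qstar R₀ (s, a₀)) := by
  have hBellman (R) : IsBellmanFixedPoint γ P (effectiveReward w R) (Qstar R) := fun p => by
    rw [hQstar R p, effectiveReward_apply]
  have hLip (R R') : ‖Qstar R - Qstar R'‖ ≤ ‖R - R'‖ / (1 - γ) := by
    refine ((hBellman R).norm_sub_le hγ0 hγ1 (hBellman R')).trans ?_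
    rw [effectiveReward_sub]
    exact div_le_div_of_nonneg_right (norm_effectiveReward_le (fun k s => (hw01 k s).1) hwsum _)
      (by linarith)
  have hClosed : IsClosed {p : C(S × A, ℝ) × A | ∀ b, p.1 (s, b) ≤ p.1 (s, p.2)} :=
    isClosed_setOf_forall_apply_le (F := fun (Q : C(S × A, ℝ)) (a : A) => Q (s, a)) (by fun_prop)
  refine ⟨fun R => ⟨?_, ?_⟩, fun R₀ Rn a a₀ hR ha hconv => ?_⟩
  · obtain ⟨a, -, ha⟩ := isCompact_univ.exists_isMaxOn Set.univ_nonempty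
      ((Qstar R).continuous.comp (Continuous.prodMk_right s)).continuousOn
    exact ⟨a, isMaxOn_univ_iff.1 ha⟩
  · exact (hClosed.preimage (Continuous.prodMk_right (Qstar R))).isCompact
  · have hRn : Tendsto (fun n => ‖Rn n - R₀‖) atTop (𝓝 0) := by
      simpa only [pi_norm_eq_ciSup, Pi.sub_apply] using hR
    have hQn : Tendsto (fun n => Qstar (Rn n)) atTop (𝓝 (Qstar R₀)) := by
      rw [tendsto_iff_norm_sub_tendsto_zero]
      exact squeeze_zero (fun n => norm_nonneg _) (fun n => hLip (Rn n) R₀)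
        (by simpa using hRn.div_const (1 - γ))
    exact hClosed.mem_of_tendsto (hQn.prodMk_nhds hconv) (Eventually.of_forall ha)

/-- Upper hemi-continuity of the effective argmax correspondence:
for each fixed `s`, the set `A*_eff(s;R) = argmax_a Q*_eff(s,a;R)` is non-empty and
compact for every tuple `R`, and the correspondence `R ↦ A*_eff(s;R)` has closed
graph: if `max_k ‖Rₙ_k - R₀_k‖ → 0`, `aₙ ∈ A*_eff(s;Rₙ)` and `aₙ → a₀`, then
`a₀ ∈ A*_eff(s;R₀)`. Here `Qstar R` is the unique Bellman fixed point for the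
effective reward of the tuple `R`. -/
theorem effective_argmax_uhc
    {S A : Type*}
    [MetricSpace S] [CompactSpace S] [MeasurableSpace S] [BorelSpace S]
    [MetricSpace A] [CompactSpace A] [Nonempty A] [MeasurableSpace A] [BorelSpace A]
    (γ : ℝ) (hγ0 : 0 ≤ γ) (hγ1 : γ < 1)
    (P : Kernel (S × A) S) [IsMarkovKernel P]
    (hFeller : ∀ f : C(S, ℝ), Continuous fun p : S × A => ∫ s', f s' ∂(P p))
    (N : ℕ) (hN : 0 < N)
    (w : Fin N → C(S, ℝ))
    (hw01 : ∀ (k : Fin N) (s : S), w k s ∈ Set.Icc (0 : ℝ) 1)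
    (hwsum : ∀ s : S, ∑ k, w k s = 1)
    (Qstar : (Fin N → C(S × A, ℝ)) → C(S × A, ℝ))
    (hQstar : ∀ (R : Fin N → C(S × A, ℝ)) (p : S × A),
      Qstar R p = (∑ k, w k p.1 * R k p) + γ * ∫ s', (⨆ a' : A, Qstar R (s', a')) ∂(P p))
    (s : S) :
    (∀ R : Fin N → C(S × A, ℝ),
      ({a : A | ∀ b : A, Qstar R (s, b) ≤ Qstar R (s, a)}).Nonempty ∧
      IsCompact {a : A | ∀ b : A, Qstar R (s, b) ≤ Qstar R (s, a)}) ∧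
    (∀ (R₀ : Fin N → C(S × A, ℝ)) (Rn : ℕ → Fin N → C(S × A, ℝ)) (a : ℕ → A) (a₀ : A),
      Tendsto (fun n => ⨆ k, ‖Rn n k - R₀ k‖) atTop (𝓝 0) →
      (∀ n, ∀ b : A, Qstar (Rn n) (s, b) ≤ Qstar (Rn n) (s, a n)) →
      Tendsto a atTop (𝓝 a₀) →
      ∀ b : A, Qstar R₀ (s, b) ≤ Qstar R₀ (s, a₀)) :=
  effective_argmax_uhc_general γ hγ0 hγ1 P N w hw01 hwsum Qstar hQstar s
end

section
/- Discontinuity of the effective-reward policy map under non-uniqueness (constructive core): let w₁,…,w_N : S → [0,1] be continuous with Σ_{k=1}^N w_k(s) = 1 for all s ∈ S. Suppose for a tuple R₀ = (R₁,₀,…,R_N,₀) of functions in C(S×A) there exists a state s₀ ∈ S such that A*_eff(s₀;R₀) is finite with at least two distinct elements, and let a₂ ∈ A*_eff(s₀;R₀). Then for every δ > 0 there exists a tuple R' with max_{1≤k≤N} ‖R'_k − R_{k,0}‖∞ ≤ δ and A*_eff(s₀;R') = {a₂}; in particular, deterministic selection maps choosing a₁ ≠ a₂ at R₀, and the map sending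 R to the uniform distribution on A*_eff(s₀;R), are both discontinuous at R₀. -/
open MeasureTheory ProbabilityTheory Filter Topology

set_option linter.unusedSectionVars false
set_option linter.unusedVariables false


section
variable {S A : Type*}
    [MetricSpace S] [CompactSpace S]
    [MetricSpace A] [CompactSpace A] [Nonempty A]

private lemma aux_bdd (F : S × A → ℝ) (hF : Continuous F) (s : S) :
    BddAbove (Set.range fun a => F (s, a)) :=
  (isCompact_range (hF.comp (continuous_const.prodMk continuous_id))).bddAbove

private lemma aux_ciSup_le_add (f g : A → ℝ) (hg : BddAbove (Set.range g)) (c : ℝ)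
    (h : ∀ a, f a ≤ g a + c) : (⨆ a, f a) ≤ (⨆ a, g a) + c :=
  ciSup_le fun a => (h a).trans (add_le_add_left (le_ciSup hg a) c)

private lemma aux_abs_ciSup_sub (f g : A → ℝ) (hf : BddAbove (Set.range f))
    (hg : BddAbove (Set.range g)) (c : ℝ) (h : ∀ a, |f a - g a| ≤ c) :
    |(⨆ a, f a) - ⨆ a, g a| ≤ c := by
  rw [abs_sub_le_iff]
  constructor
  · have := aux_ciSup_le_add f g hg c fun a => by have := (abs_sub_le_iff.1 (h a)).1; linarith
    linarith
  · have := aux_ciSup_le_add g f hf c fun a => by have := (abs_sub_le_iff.1 (h a)).2; linarith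
    linarith

private lemma aux_sup_cont (F : C(S × A, ℝ)) : Continuous fun s => ⨆ a, F (s, a) := by
  rw [Metric.continuous_iff]
  intro s ε hε
  have hu := CompactSpace.uniformContinuous_of_continuous F.continuous
  rw [Metric.uniformContinuous_iff] at hu
  obtain ⟨d, hd, hdd⟩ := hu (ε / 2) (by positivity)
  refine ⟨d, hd, fun t ht => ?_⟩
  have key : ∀ a, |F (t, a) - F (s, a)| ≤ ε / 2 := by
    intro a
    have h1 : dist ((t, a) : S × A) ((s, a) : S × A) < d := by
      rw [Prod.dist_eq, dist_self]
      exact max_lt ht hd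
    have := hdd h1
    rw [Real.dist_eq] at this
    linarith
  have := aux_abs_ciSup_sub (fun a => F (t, a)) (fun a => F (s, a))
    (aux_bdd F F.continuous t) (aux_bdd F F.continuous s) (ε / 2) key
  rw [Real.dist_eq]
  linarith

private lemma aux_integrable [MeasurableSpace S] [BorelSpace S] (μ : Measure S)
    [IsFiniteMeasure μ] (φ : S → ℝ) (hφ : Continuous φ) : Integrable φ μ :=
  hφ.integrable_of_hasCompactSupport (HasCompactSupport.of_compactSpace φ)

end

private lemma aux_key
    {S A : Type*}
    [MetricSpace S] [CompactSpace S] [MeasurableSpace S] [BorelSpace S]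
    [MetricSpace A] [CompactSpace A] [Nonempty A] [MeasurableSpace A] [BorelSpace A]
    (γ : ℝ) (hγ0 : 0 ≤ γ) (hγ1 : γ < 1)
    (P : Kernel (S × A) S) [IsMarkovKernel P]
    (hFeller : ∀ f : C(S, ℝ), Continuous fun p : S × A => ∫ s', f s' ∂(P p))
    (N : ℕ) (hN : 0 < N)
    (w : Fin N → C(S, ℝ))
    (hwsum : ∀ s : S, ∑ k, w k s = 1)
    (Qstar : (Fin N → C(S × A, ℝ)) → C(S × A, ℝ))
    (hQstar : ∀ (R : Fin N → C(S × A, ℝ)) (p : S × A),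
      Qstar R p = (∑ k, w k p.1 * R k p) + γ * ∫ s', (⨆ a' : A, Qstar R (s', a')) ∂(P p))
    (R₀ : Fin N → C(S × A, ℝ)) (s₀ : S) (a₂ : A)
    (ha₂ : a₂ ∈ {a : A | ∀ b : A, Qstar R₀ (s₀, b) ≤ Qstar R₀ (s₀, a)})
    (δ : ℝ) (hδ : 0 < δ) :
    ∃ R' : Fin N → C(S × A, ℝ),
      (⨆ k, ‖R' k - R₀ k‖) ≤ δ ∧
      {a : A | ∀ b : A, Qstar R' (s₀, b) ≤ Qstar R' (s₀, a)} = {a₂} := by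
  classical
  haveI : Nonempty (Fin N) := ⟨⟨0, hN⟩⟩
  set ε : ℝ := δ / 2 with hε
  have hε0 : 0 < ε := by positivity
  -- the action penalty
  set g : C(A, ℝ) := ⟨fun a => min 1 (dist a a₂),
    continuous_const.min (continuous_id.dist continuous_const)⟩ with hgdef
  have hg0 : ∀ a, 0 ≤ g a := fun a => le_min zero_le_one dist_nonneg
  have hg1 : ∀ a, g a ≤ 1 := fun a => min_le_left _ _
  have hga₂ : g a₂ = 0 := by simp [hgdef]
  have hgpos : ∀ a, a ≠ a₂ → 0 < g a := fun a ha =>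
    lt_min one_pos (dist_pos.2 ha)
  set Q : C(S × A, ℝ) := Qstar R₀ with hQdef
  set Q' : C(S × A, ℝ) := ⟨fun p => Q p - ε * g p.2,
    Q.continuous.sub (continuous_const.mul (g.continuous.comp continuous_snd))⟩ with hQ'def
  set M : C(S, ℝ) := ⟨fun s => ⨆ a, Q (s, a), aux_sup_cont Q⟩ with hMdef
  set M' : C(S, ℝ) := ⟨fun s => ⨆ a, Q' (s, a), aux_sup_cont Q'⟩ with hM'def
  set u : C(S, ℝ) := M - M' with hudef
  set f : C(S × A, ℝ) := ⟨fun p => -(ε * g p.2) + γ * ∫ s', u s' ∂(P p),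
    ((continuous_const.mul (g.continuous.comp continuous_snd)).neg).add
      (continuous_const.mul (hFeller u))⟩ with hfdef
  set R' : Fin N → C(S × A, ℝ) := fun k => R₀ k + f with hR'def
  -- Bellman equation for Q' and R'
  have hBell : ∀ p : S × A,
      Q' p = (∑ k, w k p.1 * R' k p) + γ * ∫ s', (⨆ a' : A, Q' (s', a')) ∂(P p) := by
    intro p
    have e₀ : Q p = (∑ k, w k p.1 * R₀ k p) + γ * ∫ s', M s' ∂(P p) := hQstar R₀ p
    have hsum : (∑ k, w k p.1 * R' k p) = (∑ k, w k p.1 * R₀ k p) + f p := by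
      have h1 : ∀ k : Fin N, w k p.1 * R' k p = w k p.1 * R₀ k p + w k p.1 * f p := by
        intro k; simp [hR'def]; ring
      rw [Finset.sum_congr rfl fun k _ => h1 k, Finset.sum_add_distrib, ← Finset.sum_mul,
        hwsum]
      ring
    have hIu : ∫ s', u s' ∂(P p) = (∫ s', M s' ∂(P p)) - ∫ s', M' s' ∂(P p) := by
      simp only [hudef, ContinuousMap.sub_apply]
      exact integral_sub (aux_integrable _ _ M.continuous) (aux_integrable _ _ M'.continuous)
    have hint : (∫ s', (⨆ a' : A, Q' (s', a')) ∂(P p)) = ∫ s', M' s' ∂(P p) := rfl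
    have hfp : f p = -(ε * g p.2) + γ * ((∫ s', M s' ∂(P p)) - ∫ s', M' s' ∂(P p)) := by
      simp only [hfdef, ContinuousMap.coe_mk, hIu]
    have hQ'p : Q' p = Q p - ε * g p.2 := rfl
    rw [hsum, hint, hfp, hQ'p, e₀]
    ring
  -- uniqueness of continuous Bellman fixed points
  have huniq : Qstar R' = Q' := by
    set D : C(S × A, ℝ) := Qstar R' - Q' with hDdef
    have hDle : ∀ p : S × A, |D p| ≤ γ * ‖D‖ := by
      intro p
      have e₁ := hQstar R' p
      have e₂ := hBell p
      haveI : IsProbabilityMeasure (P p) := IsMarkovKernel.isProbabilityMeasure p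
      have hVabs : ∀ s' : S, |(⨆ a', Qstar R' (s', a')) - ⨆ a', Q' (s', a')| ≤ ‖D‖ := by
        intro s'
        refine aux_abs_ciSup_sub _ _ (aux_bdd _ (Qstar R').continuous s')
          (aux_bdd _ Q'.continuous s') _ fun a => ?_
        have : D (s', a) = Qstar R' (s', a) - Q' (s', a) := rfl
        rw [← this]
        exact D.norm_coe_le_norm (s', a)
      have hIsub : (∫ s', (⨆ a', Qstar R' (s', a')) ∂(P p)) - ∫ s', (⨆ a', Q' (s', a')) ∂(P p)
          = ∫ s', ((⨆ a', Qstar R' (s', a')) - ⨆ a', Q' (s', a')) ∂(P p) :=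
        (integral_sub (aux_integrable _ _ (aux_sup_cont (Qstar R')))
          (aux_integrable _ _ (aux_sup_cont Q'))).symm
      have hInorm : |∫ s', ((⨆ a', Qstar R' (s', a')) - ⨆ a', Q' (s', a')) ∂(P p)| ≤ ‖D‖ := by
        have := norm_integral_le_of_norm_le_const (μ := P p)
          (f := fun s' => (⨆ a', Qstar R' (s', a')) - ⨆ a', Q' (s', a')) (C := ‖D‖)
          (Eventually.of_forall fun s' => by simpa [Real.norm_eq_abs] using hVabs s')
        simpa [Real.norm_eq_abs] using this
      have hDp : D p = γ * ((∫ s', (⨆ a', Qstar R' (s', a')) ∂(P p))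
          - ∫ s', (⨆ a', Q' (s', a')) ∂(P p)) := by
        have : D p = Qstar R' p - Q' p := rfl
        rw [this, e₁, e₂]; ring
      rw [hDp, hIsub, abs_mul, abs_of_nonneg hγ0]
      exact mul_le_mul_of_nonneg_left hInorm hγ0
    have hDnorm : ‖D‖ ≤ γ * ‖D‖ := by
      refine (ContinuousMap.norm_le _ (mul_nonneg hγ0 (norm_nonneg _))).2 fun p => ?_
      simpa [Real.norm_eq_abs] using hDle p
    have : ‖D‖ = 0 := by nlinarith [norm_nonneg D]
    have hD0 : D = 0 := norm_eq_zero.1 this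
    have := sub_eq_zero.1 hD0
    exact this
  refine ⟨R', ?_, ?_⟩
  · -- norm bound
    have hfk : ∀ k : Fin N, R' k - R₀ k = f := fun k => by simp [hR'def]
    have hMM' : ∀ s : S, |u s| ≤ ε := by
      intro s
      have : ∀ a, |Q (s, a) - Q' (s, a)| ≤ ε := by
        intro a
        have : Q (s, a) - Q' (s, a) = ε * g a := by simp [hQ'def]
        rw [this, abs_of_nonneg (mul_nonneg hε0.le (hg0 a))]
        nlinarith [hg1 a, hg0 a]
      simpa [hudef, hMdef, hM'def] using
        aux_abs_ciSup_sub (fun a => Q (s, a)) (fun a => Q' (s, a))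
          (aux_bdd _ Q.continuous s) (aux_bdd _ Q'.continuous s) ε this
    have hfnorm : ‖f‖ ≤ δ := by
      refine (ContinuousMap.norm_le _ hδ.le).2 fun p => ?_
      haveI : IsProbabilityMeasure (P p) := IsMarkovKernel.isProbabilityMeasure p
      have hI : |∫ s', u s' ∂(P p)| ≤ ε := by
        have := norm_integral_le_of_norm_le_const (μ := P p) (f := fun s' => u s') (C := ε)
          (Eventually.of_forall fun s' => by simpa [Real.norm_eq_abs] using hMM' s')
        simpa [Real.norm_eq_abs] using this
      have hfp : f p = -(ε * g p.2) + γ * ∫ s', u s' ∂(P p) := rfl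
      rw [Real.norm_eq_abs, hfp]
      have h1 : |(-(ε * g p.2) + γ * ∫ s', u s' ∂(P p))| ≤ ε * g p.2 + γ * ε := by
        calc |(-(ε * g p.2) + γ * ∫ s', u s' ∂(P p))|
            ≤ |(-(ε * g p.2))| + |γ * ∫ s', u s' ∂(P p)| := abs_add_le _ _
          _ ≤ ε * g p.2 + γ * ε := by
              rw [abs_neg, abs_of_nonneg (mul_nonneg hε0.le (hg0 p.2)), abs_mul,
                abs_of_nonneg hγ0]
              exact add_le_add_right (mul_le_mul_of_nonneg_left hI hγ0) _
      nlinarith [hg1 p.2, hg0 p.2]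
    calc (⨆ k, ‖R' k - R₀ k‖) = ⨆ _ : Fin N, ‖f‖ := by simp only [hfk]
      _ = ‖f‖ := ciSup_const
      _ ≤ δ := hfnorm
  · -- argmax set is {a₂}
    rw [huniq]
    ext a
    simp only [Set.mem_setOf_eq, Set.mem_singleton_iff]
    constructor
    · intro h
      by_contra hne'
      have h₂ := h a₂
      have hQQ : Q (s₀, a) ≤ Q (s₀, a₂) := ha₂ a
      have hc₂ : Q' (s₀, a₂) = Q (s₀, a₂) := by simp [hQ'def, hga₂]
      have hca : Q' (s₀, a) = Q (s₀, a) - ε * g a := rfl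
      rw [hc₂, hca] at h₂
      nlinarith [hgpos a hne', hε0]
    · intro ha
      rw [ha]
      intro b
      have hQQ : Q (s₀, b) ≤ Q (s₀, a₂) := ha₂ b
      have hc₂ : Q' (s₀, a₂) = Q (s₀, a₂) := by simp [hQ'def, hga₂]
      have hcb : Q' (s₀, b) = Q (s₀, b) - ε * g b := rfl
      rw [hc₂, hcb]
      nlinarith [hg0 b, hε0]

/-- Discontinuity of the effective-reward policy map under
non-uniqueness (constructive core): if `A*_eff(s₀;R₀)` is finite with two distinct
elements `a₁ ≠ a₂`, then for every `δ > 0` there is a tuple `R'` with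
`max_k ‖R'_k - R₀_k‖ ≤ δ` and `A*_eff(s₀;R') = {a₂}`; moreover the total variation
distance between the uniform distribution on `A*_eff(s₀;R')` (the Dirac at `a₂`) and
the uniform distribution on `A*_eff(s₀;R₀)` is at least `1/2`. In particular, any
deterministic selection map choosing `a₁` at `R₀` is discontinuous at `R₀`. -/
theorem effective_policy_discontinuity
    {S A : Type*}
    [MetricSpace S] [CompactSpace S] [MeasurableSpace S] [BorelSpace S]
    [MetricSpace A] [CompactSpace A] [Nonempty A] [MeasurableSpace A] [BorelSpace A]
    [DecidableEq A]
    (γ : ℝ) (hγ0 : 0 ≤ γ) (hγ1 : γ < 1)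
    (P : Kernel (S × A) S) [IsMarkovKernel P]
    (hFeller : ∀ f : C(S, ℝ), Continuous fun p : S × A => ∫ s', f s' ∂(P p))
    (N : ℕ) (hN : 0 < N)
    (w : Fin N → C(S, ℝ))
    (hw01 : ∀ (k : Fin N) (s : S), w k s ∈ Set.Icc (0 : ℝ) 1)
    (hwsum : ∀ s : S, ∑ k, w k s = 1)
    (Qstar : (Fin N → C(S × A, ℝ)) → C(S × A, ℝ))
    (hQstar : ∀ (R : Fin N → C(S × A, ℝ)) (p : S × A),
      Qstar R p = (∑ k, w k p.1 * R k p) + γ * ∫ s', (⨆ a' : A, Qstar R (s', a')) ∂(P p))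
    (R₀ : Fin N → C(S × A, ℝ)) (s₀ : S)
    (hfin : {a : A | ∀ b : A, Qstar R₀ (s₀, b) ≤ Qstar R₀ (s₀, a)}.Finite)
    (a₁ a₂ : A)
    (ha₁ : a₁ ∈ {a : A | ∀ b : A, Qstar R₀ (s₀, b) ≤ Qstar R₀ (s₀, a)})
    (ha₂ : a₂ ∈ {a : A | ∀ b : A, Qstar R₀ (s₀, b) ≤ Qstar R₀ (s₀, a)})
    (hne : a₁ ≠ a₂) :
    (∀ δ > (0 : ℝ), ∃ R' : Fin N → C(S × A, ℝ),
      (⨆ k, ‖R' k - R₀ k‖) ≤ δ ∧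
      {a : A | ∀ b : A, Qstar R' (s₀, b) ≤ Qstar R' (s₀, a)} = {a₂} ∧
      (1 / 2 : ℝ) ≤ (1 / 2 : ℝ) * ∑ a ∈ hfin.toFinset,
        |(if a = a₂ then (1 : ℝ) else 0) - 1 / (hfin.toFinset.card : ℝ)|) ∧
    (∀ pol : (Fin N → C(S × A, ℝ)) → S → A,
      (∀ (R : Fin N → C(S × A, ℝ)) (s : S),
        pol R s ∈ {a : A | ∀ b : A, Qstar R (s, b) ≤ Qstar R (s, a)}) →
      pol R₀ s₀ = a₁ → ¬ ContinuousAt pol R₀) := by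
  have key := aux_key γ hγ0 hγ1 P hFeller N hN w hwsum Qstar hQstar R₀ s₀ a₂ ha₂
  -- total variation lower bound
  have h1T : a₁ ∈ hfin.toFinset := hfin.mem_toFinset.2 ha₁
  have h2T : a₂ ∈ hfin.toFinset := hfin.mem_toFinset.2 ha₂
  have tv : (1 / 2 : ℝ) ≤ (1 / 2 : ℝ) * ∑ a ∈ hfin.toFinset,
      |(if a = a₂ then (1 : ℝ) else 0) - 1 / (hfin.toFinset.card : ℝ)| := by
    set T := hfin.toFinset with hT
    have hcard : 2 ≤ T.card := by
      have hsub : ({a₁, a₂} : Finset A) ⊆ T := by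
        intro x hx
        rcases Finset.mem_insert.1 hx with rfl | hx
        · exact h1T
        · rw [Finset.mem_singleton.1 hx]; exact h2T
      calc 2 = ({a₁, a₂} : Finset A).card := (Finset.card_pair hne).symm
        _ ≤ T.card := Finset.card_le_card hsub
    have hn0 : (0 : ℝ) < T.card := by
      have : 0 < T.card := by omega
      exact_mod_cast this
    have hn2 : (2 : ℝ) ≤ T.card := by exact_mod_cast hcard
    have hsplit : ∑ a ∈ T, |(if a = a₂ then (1 : ℝ) else 0) - 1 / (T.card : ℝ)|
        = |1 - 1 / (T.card : ℝ)| + ∑ a ∈ T.erase a₂, (1 / (T.card : ℝ)) := by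
      rw [← Finset.add_sum_erase T _ h2T]
      simp only [if_pos rfl]
      congr 1
      refine Finset.sum_congr rfl fun a ha => ?_
      rw [if_neg (Finset.ne_of_mem_erase ha)]
      rw [abs_sub_comm, sub_zero, abs_of_nonneg (div_nonneg zero_le_one (Nat.cast_nonneg _))]
    rw [hsplit, Finset.sum_const, Finset.card_erase_of_mem h2T, nsmul_eq_mul]
    have hcast : ((T.card - 1 : ℕ) : ℝ) = (T.card : ℝ) - 1 := by
      have : 1 ≤ T.card := by omega
      push_cast [Nat.cast_sub this]
      ring
    rw [hcast, abs_of_nonneg (by rw [sub_nonneg]; rw [div_le_one hn0]; linarith)]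
    have h1n : 1 / (T.card : ℝ) ≤ 1 / 2 := by
      apply one_div_le_one_div_of_le <;> linarith
    have heq : ((T.card : ℝ) - 1) * (1 / (T.card : ℝ)) = 1 - 1 / (T.card : ℝ) := by
      rw [mul_one_div, sub_div, div_self hn0.ne']
    rw [heq]
    linarith
  refine ⟨fun δ hδ => ?_, fun pol hpol hpa hcont => ?_⟩
  · obtain ⟨R', hb, hset⟩ := key δ hδ
    exact ⟨R', hb, hset, tv⟩
  · -- discontinuity of the selection map
    have hseq : ∀ n : ℕ, ∃ R' : Fin N → C(S × A, ℝ),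
        (⨆ k, ‖R' k - R₀ k‖) ≤ 1 / (n + 1) ∧
        {a : A | ∀ b : A, Qstar R' (s₀, b) ≤ Qstar R' (s₀, a)} = {a₂} := fun n =>
      key (1 / (n + 1)) (by positivity)
    choose Rs hRs1 hRs2 using hseq
    have hTend : Tendsto Rs atTop (𝓝 R₀) := by
      rw [tendsto_pi_nhds]
      intro k
      rw [tendsto_iff_dist_tendsto_zero]
      refine squeeze_zero (fun n => dist_nonneg) (fun n => ?_)
        tendsto_one_div_add_atTop_nhds_zero_nat
      have h1 : dist (Rs n k) (R₀ k) = ‖Rs n k - R₀ k‖ := dist_eq_norm _ _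
      have h2 : ‖Rs n k - R₀ k‖ ≤ ⨆ j, ‖Rs n j - R₀ j‖ :=
        le_ciSup (f := fun j => ‖Rs n j - R₀ j‖) (Set.Finite.bddAbove (Set.finite_range _)) k
      rw [h1]
      exact h2.trans (hRs1 n)
    have hlim : Tendsto (fun n => pol (Rs n) s₀) atTop (𝓝 (pol R₀ s₀)) :=
      ((continuous_apply s₀).tendsto (pol R₀)).comp (hcont.tendsto.comp hTend)
    have hconst : ∀ n, pol (Rs n) s₀ = a₂ := fun n => by
      have := hpol (Rs n) s₀
      rw [hRs2 n] at this
      exact this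
    have hlim2 : Tendsto (fun _ : ℕ => a₂) atTop (𝓝 (pol R₀ s₀)) := by
      simpa [hconst] using hlim
    have := tendsto_nhds_unique hlim2 tendsto_const_nhds
    rw [hpa] at this
    exact hne this
end
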